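/- Terminating Saalschütz from the symmetric formula: for complex a, c, d and a nonnegative integer n (generic parameters), 3F2(a, a+c+d-1-n, -n; a+c-n, a+d-n; 1) = ((1-c)_n (1-d)_n) / ((1-a-c)_n (1-a-d)_n). -/

import Mathlib

/-!
Multiplying the summand by `(a+c-n)_n (a+d-n)_n` clears all denominators and leaves polynomial
terms `U n k`. Their ratios in `n` and in `k` make them satisfy the creative-telescoping relation
`U (n+1) k - (n+1-c)(n+1-d) U n k = G n (k+1) - G n k` with the certificate
`G n (k+1) = -(a+k)(2n+2-a-c-d-k) U n k`, so the cleared sum is multiplied by `(n+1-c)(n+1-d)`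
when `n` increases by one, which is the recursion of `(1-c)_n (1-d)_n`. Reflection turns the
denominator `(a+c-n)_n (a+d-n)_n` into `(1-a-c)_n (1-a-d)_n`.
-/

/-- Rising factorial (Pochhammer symbol) `(x)_k = x(x+1)⋯(x+k-1)`. -/
noncomputable def poch (x : ℂ) (k : ℕ) : ℂ := ∏ i ∈ Finset.range k, (x + i)

open Finset

lemma poch_zero (x : ℂ) : poch x 0 = 1 := prod_range_zero _

lemma poch_succ_right (x : ℂ) (k : ℕ) : poch x (k + 1) = poch x k * (x + k) :=
  prod_range_succ _ _

lemma poch_succ_left (x : ℂ) (k : ℕ) : poch x (k + 1) = x * poch (x + 1) k := by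
  simp only [poch, prod_range_succ', Nat.cast_succ, Nat.cast_zero, add_zero, add_assoc,
    add_comm (1 : ℂ)]
  ring

lemma poch_add (x : ℂ) (k m : ℕ) : poch x (k + m) = poch x k * poch (x + k) m := by
  simp only [poch, prod_range_add, Nat.cast_add, add_assoc]

lemma poch_sub_natCast_succ (x : ℂ) (n k : ℕ) :
    poch (x - (n + 1 : ℕ)) (k + 1) = (x - (n + 1 : ℕ)) * poch (x - n) k := by
  rw [poch_succ_left, Nat.cast_succ, sub_add_eq_sub_sub, sub_add_cancel]

lemma poch_neg (x : ℂ) (k : ℕ) : poch (-x) k = (-1) ^ k * (descPochhammer ℂ k).eval x := by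
  have h : ∀ i ∈ range k, -x + i = -(x - i) := fun _ _ ↦ by ring
  rw [poch, prod_congr rfl h, prod_neg, card_range, descPochhammer_eval_eq_prod_range]

lemma poch_neg_natCast (n k : ℕ) :
    poch (-(n : ℂ)) k = (-1) ^ k * (n.choose k * k.factorial) := by
  rw [poch_neg, descPochhammer_eval_eq_descFactorial, Nat.descFactorial_eq_factorial_mul_choose,
    Nat.cast_mul, mul_comm (k.factorial : ℂ)]

lemma poch_sub_natCast_self (x : ℂ) (n : ℕ) : poch (x - n) n = (-1) ^ n * poch (1 - x) n := by
  induction n with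
  | zero => simp [poch_zero]
  | succ n ih => rw [poch_sub_natCast_succ, ih, poch_succ_right, pow_succ]; push_cast; ring

lemma poch_sub_natCast_eq_mul (x : ℂ) {n k : ℕ} (h : k ≤ n) :
    poch (x - n) n = poch (x - n) k * poch (x - (n - k : ℕ)) (n - k) := by
  obtain ⟨m, rfl⟩ := Nat.exists_eq_add_of_le h
  rw [Nat.add_sub_cancel_left, poch_add]
  congr 2
  push_cast
  ring

lemma poch_sub_natCast_self_mul (x y : ℂ) (n : ℕ) :
    poch (x - n) n * poch (y - n) n = poch (1 - x) n * poch (1 - y) n := by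
  rw [poch_sub_natCast_self, poch_sub_natCast_self, mul_mul_mul_comm, ← mul_pow, neg_one_mul,
    neg_neg, one_pow, one_mul]

namespace Saalschutz

variable (a c d : ℂ)

/-- The `k`-th summand multiplied by `(a+c-n)_n (a+d-n)_n`; note `a + c - (n - k) = a + c - n + k`
for `k ≤ n`. -/
noncomputable def term (n k : ℕ) : ℂ :=
  (-1) ^ k * n.choose k * poch a k * poch (a + c + d - 1 - n) k *
    poch (a + c - (n - k : ℕ)) (n - k) * poch (a + d - (n - k : ℕ)) (n - k)

noncomputable def cert (n : ℕ) : ℕ → ℂ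
  | 0 => 0
  | k + 1 => -(a + k) * (2 * n + 2 - a - c - d - k) * term a c d n k

lemma term_of_lt {n k : ℕ} (h : n < k) : term a c d n k = 0 := by
  simp [term, Nat.choose_eq_zero_of_lt h]

lemma term_succ_zero (n : ℕ) :
    term a c d (n + 1) 0 = (a + c - (n + 1 : ℕ)) * (a + d - (n + 1 : ℕ)) * term a c d n 0 := by
  simp only [term, Nat.sub_zero, Nat.choose_zero_right, poch_zero, poch_sub_natCast_succ]
  ring

lemma succ_mul_term_succ_succ (n k : ℕ) :
    (k + 1) * term a c d (n + 1) (k + 1) =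
      -(n + 1) * (a + k) * (a + c + d - 1 - (n + 1 : ℕ)) * term a c d n k := by
  have hchoose : ((n + 1).choose (k + 1) : ℂ) * (k + 1) = (n + 1) * n.choose k := by
    exact_mod_cast (Nat.add_one_mul_choose_eq n k).symm
  rw [term, term, Nat.add_sub_add_right, poch_succ_right a, poch_sub_natCast_succ]
  linear_combination (-1) ^ (k + 1) * poch a k * (a + k) * (a + c + d - 1 - (n + 1 : ℕ)) *
    poch (a + c + d - 1 - n) k * poch (a + c - (n - k : ℕ)) (n - k) *
    poch (a + d - (n - k : ℕ)) (n - k) * hchoose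

lemma succ_mul_term_succ_right (n k : ℕ) :
    (k + 1) * (a + c - n + k) * (a + d - n + k) * term a c d n (k + 1) =
      -(n - k) * (a + k) * (a + c + d - 1 - n + k) * term a c d n k := by
  rcases lt_trichotomy k n with hk | rfl | hk
  · obtain ⟨m, hm⟩ := Nat.exists_eq_add_of_lt hk
    have hsub : n - k = m + 1 := by omega
    have hsub' : n - (k + 1) = m := by omega
    have hcast : ((m + 1 : ℕ) : ℂ) = n - k := by rw [← hsub, Nat.cast_sub hk.le]
    have hchoose : (n.choose (k + 1) : ℂ) * (k + 1) = n.choose k * (n - k) := by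
      have h := congrArg (Nat.cast (R := ℂ)) (Nat.choose_succ_right_eq n k)
      push_cast [Nat.cast_sub hk.le] at h
      exact h
    rw [term, term, hsub, hsub', poch_sub_natCast_succ, poch_sub_natCast_succ, hcast,
      poch_succ_right a, poch_succ_right (a + c + d - 1 - n)]
    linear_combination (-1) ^ (k + 1) * (a + c - n + k) * (a + d - n + k) * poch a k * (a + k) *
      poch (a + c + d - 1 - n) k * (a + c + d - 1 - n + k) * poch (a + c - m) m *
      poch (a + d - m) m * hchoose
  · simp [term_of_lt a c d (Nat.lt_succ_self k)]
  · simp [term_of_lt a c d hk, term_of_lt a c d (Nat.lt_succ_of_lt hk)]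

lemma term_succ_sub (n k : ℕ) :
    term a c d (n + 1) k - (n + 1 - c) * (n + 1 - d) * term a c d n k =
      cert a c d n (k + 1) - cert a c d n k := by
  rcases k with _ | j
  · rw [term_succ_zero, cert, cert]
    push_cast
    ring
  · have h₁ := succ_mul_term_succ_succ a c d n j
    have h₂ := succ_mul_term_succ_right a c d n j
    -- once `h₁` is used, `term n (j+1)` has coefficient
    -- `(a+j+1)(2n+1-a-c-d-j) - (n+1-c)(n+1-d) = -(a+c-n+j)(a+d-n+j)`, which `h₂` eliminates
    refine mul_left_cancel₀ (Nat.cast_add_one_ne_zero j) ?_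
    rw [cert, cert]
    push_cast at h₁ ⊢
    linear_combination h₁ - h₂

theorem sum_range_term (n : ℕ) :
    ∑ k ∈ range (n + 1), term a c d n k = poch (1 - c) n * poch (1 - d) n := by
  induction n with
  | zero => simp [term, poch_zero]
  | succ n ih =>
    calc ∑ k ∈ range (n + 2), term a c d (n + 1) k
        = ∑ k ∈ range (n + 2), ((n + 1 - c) * (n + 1 - d) * term a c d n k +
            (cert a c d n (k + 1) - cert a c d n k)) :=
          sum_congr rfl fun k _ ↦ by rw [← term_succ_sub]; ring
      _ = (n + 1 - c) * (n + 1 - d) * ∑ k ∈ range (n + 1), term a c d n k := by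
          rw [sum_add_distrib, ← mul_sum, sum_range_sub, sum_range_succ _ (n + 1), cert, cert,
            term_of_lt a c d n.lt_succ_self]
          ring
      _ = poch (1 - c) (n + 1) * poch (1 - d) (n + 1) := by
          rw [ih, poch_succ_right, poch_succ_right]
          ring

lemma summand_eq_term_div {n k : ℕ} (hk : k ≤ n) (hc : poch (a + c - n) n ≠ 0)
    (hd : poch (a + d - n) n ≠ 0) :
    poch a k * poch (a + c + d - 1 - n) k * poch (-(n : ℂ)) k /
        ((k.factorial : ℂ) * poch (a + c - n) k * poch (a + d - n) k) =
      term a c d n k / (poch (a + c - n) n * poch (a + d - n) n) := by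
  have hsplit_c := poch_sub_natCast_eq_mul (a + c) hk
  have hsplit_d := poch_sub_natCast_eq_mul (a + d) hk
  rw [hsplit_c] at hc
  rw [hsplit_d] at hd
  have hden : (k.factorial : ℂ) * poch (a + c - n) k * poch (a + d - n) k ≠ 0 :=
    mul_ne_zero (mul_ne_zero (Nat.cast_ne_zero.mpr k.factorial_ne_zero) (left_ne_zero_of_mul hc))
      (left_ne_zero_of_mul hd)
  rw [hsplit_c, hsplit_d, div_eq_div_iff hden (mul_ne_zero hc hd), term, poch_neg_natCast]
  ring

end Saalschutz

theorem terminating_saalschutz_general (a c d : ℂ) (n : ℕ)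
    (hden : ∀ k ≤ n, poch (a + c - n) k ≠ 0 ∧ poch (a + d - n) k ≠ 0) :
    ∑ k ∈ Finset.range (n + 1),
      poch a k * poch (a + c + d - 1 - n) k * poch (-(n : ℂ)) k /
        ((k.factorial : ℂ) * poch (a + c - n) k * poch (a + d - n) k)
      = poch (1 - c) n * poch (1 - d) n / (poch (1 - a - c) n * poch (1 - a - d) n) := by
  obtain ⟨hc, hd⟩ := hden n le_rfl
  rw [sum_congr rfl fun k hk ↦
      Saalschutz.summand_eq_term_div a c d (Nat.lt_succ_iff.mp (mem_range.mp hk)) hc hd,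
    ← sum_div, Saalschutz.sum_range_term, poch_sub_natCast_self_mul, sub_add_eq_sub_sub,
    sub_add_eq_sub_sub]

/-- Terminating Saalschütz-type identity: the case `b = -n` of the symmetric formula. -/
theorem terminating_saalschutz (a c d : ℂ) (n : ℕ)
    (hden : ∀ k ≤ n, poch (a + c - n) k ≠ 0 ∧ poch (a + d - n) k ≠ 0)
    (h1 : poch (1 - a - c) n ≠ 0) (h2 : poch (1 - a - d) n ≠ 0) :
    ∑ k ∈ Finset.range (n + 1),
      poch a k * poch (a + c + d - 1 - n) k * poch (-(n : ℂ)) k /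
        ((k.factorial : ℂ) * poch (a + c - n) k * poch (a + d - n) k)
      = poch (1 - c) n * poch (1 - d) n / (poch (1 - a - c) n * poch (1 - a - d) n) :=
  terminating_saalschutz_general a c d n hden
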